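/- (Uniform norm comparability of the mode penalties, used in Proposition 4.2's proof) Fix a mode d and suppose Assumption 4.1 holds for mode d: for every pair i < j in {1,…,n_d} there is a finite path i → k → ⋯ → l → j along which all weights w_{d,ik},…,w_{d,lj} are strictly positive. Then for every pair i < j there exists w > 0 (the minimum weight along such a path) such that for all u ∈ ℝ^n, w · ‖A_{d,ij} u‖₂ ≤ R_d(u), where R_d(u) = Σ_{i'<j'} w_{d,i'j'} ‖A_{d,i'j'} u‖₂. -/

import Mathlib

open scoped BigOperators
open Finset MeasureTheory

noncomputable section

/-- The full (vectorized) index set of a `D`-way tensor with mode sizes `n d`. -/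
abbrev TIdx {D : ℕ} (n : Fin D → ℕ) : Type := ∀ d, Fin (n d)

/-- The index set of a mode-`d` subarray: all modes except `d`. -/
abbrev RIdx {D : ℕ} (n : Fin D → ℕ) (d : Fin D) : Type :=
  ∀ d' : {x : Fin D // x ≠ d}, Fin (n d'.1)

/-- Insert the mode-`d` index `i` into the partial index `g`. -/
def insIdx {D : ℕ} (n : Fin D → ℕ) (d : Fin D) (g : RIdx n d) (i : Fin (n d)) : TIdx n :=
  fun d' => if h : d' = d then h.symm ▸ i else g ⟨d', h⟩

/-- The matrix `A_{d,ij} = I ⊗ ⋯ ⊗ (e_i - e_j)ᵀ ⊗ ⋯ ⊗ I`, realized on the canonical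
multi-index sets: applied to `u`, the `g`-th entry is `u(.., i, ..) - u(.., j, ..)`. -/
def Amat {D : ℕ} (n : Fin D → ℕ) (d : Fin D) (i j : Fin (n d)) :
    Matrix (RIdx n d) (TIdx n) ℝ :=
  Matrix.of fun g f =>
    (if f = insIdx n d g i then (1 : ℝ) else 0) - (if f = insIdx n d g j then (1 : ℝ) else 0)

/-- Euclidean (ℓ₂) norm of a finitely-indexed real vector. -/
def l2 {κ : Type*} [Fintype κ] (v : κ → ℝ) : ℝ := Real.sqrt (∑ a, v a ^ 2)

/-- The mode-`d` fusion penalty `R_d(u) = Σ_{i<j} w_{d,ij} ‖A_{d,ij} u‖₂`. -/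
def Rmode {D : ℕ} (n : Fin D → ℕ) (d : Fin D) (w : Fin (n d) → Fin (n d) → ℝ)
    (u : TIdx n → ℝ) : ℝ :=
  ∑ i, ∑ j, if i < j then w i j * l2 ((Amat n d i j).mulVec u) else 0

/-- The CoCo objective `F_γ(u) = (1/2)‖x - u‖₂² + γ Σ_d Σ_{i<j} w_{d,ij} ‖A_{d,ij} u‖₂`. -/
def coco {D : ℕ} (n : Fin D → ℕ) (x : TIdx n → ℝ) (γ : ℝ)
    (w : ∀ d, Fin (n d) → Fin (n d) → ℝ) (u : TIdx n → ℝ) : ℝ :=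
  (1 / 2) * ∑ f, (x f - u f) ^ 2 + γ * ∑ d, Rmode n d (w d) u

/-- Assumption 4.1 for mode `d`: any two mode-`d` indices are joined by a finite path each of
whose steps is a pair with strictly positive weight. -/
def ModeConnected {D : ℕ} (n : Fin D → ℕ) (d : Fin D)
    (w : Fin (n d) → Fin (n d) → ℝ) : Prop :=
  ∀ i j : Fin (n d),
    Relation.ReflTransGen (fun a b => (a < b ∧ 0 < w a b) ∨ (b < a ∧ 0 < w b a)) i j

/-!
Applied to `u`, the operator `A_{d,ij}` takes the difference of the mode-`d` slices `u(…, i, …)`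
and `u(…, j, …)`, so `‖A_{d,ij} u‖₂` is the Euclidean distance between two slices. A single
positive-weight pair `(a, b)` gives `w_{ab} ‖A_{d,ab} u‖₂ ≤ R_d(u)`, and the triangle inequality
for the slice distance carries such bounds along a connecting path, at the cost of halving the
smaller of the two constants at each step.
-/

theorem Relation.ReflTransGen.exists_pos_mul_dist_le {α ι E : Type*} [PseudoMetricSpace E]
    {r : α → α → Prop} {x : ι → α → E} {R : ι → ℝ} (hR : ∀ i, 0 ≤ R i)
    (hr : ∀ a b, r a b → ∃ c, 0 < c ∧ ∀ i, c * dist (x i a) (x i b) ≤ R i)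
    {a b : α} (h : Relation.ReflTransGen r a b) :
    ∃ c, 0 < c ∧ ∀ i, c * dist (x i a) (x i b) ≤ R i := by
  induction h with
  | refl => exact ⟨1, one_pos, fun i => by simpa using hR i⟩
  | @tail b e _ hbe ih =>
    obtain ⟨c₁, hc₁, h₁⟩ := ih
    obtain ⟨c₂, hc₂, h₂⟩ := hr b e hbe
    refine ⟨min c₁ c₂ / 2, by positivity, fun i => ?_⟩
    have hab : min c₁ c₂ * dist (x i a) (x i b) ≤ R i :=
      (mul_le_mul_of_nonneg_right (min_le_left _ _) dist_nonneg).trans (h₁ i)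
    have hbe : min c₁ c₂ * dist (x i b) (x i e) ≤ R i :=
      (mul_le_mul_of_nonneg_right (min_le_right _ _) dist_nonneg).trans (h₂ i)
    calc min c₁ c₂ / 2 * dist (x i a) (x i e)
        ≤ (min c₁ c₂ * dist (x i a) (x i b) + min c₁ c₂ * dist (x i b) (x i e)) / 2 := by
          have := mul_le_mul_of_nonneg_left (dist_triangle (x i a) (x i b) (x i e))
            (le_min hc₁.le hc₂.le)
          linarith
      _ ≤ R i := by linarith

lemma l2_eq_norm {κ : Type*} [Fintype κ] (v : κ → ℝ) :
    l2 v = ‖(WithLp.toLp 2 v : EuclideanSpace ℝ κ)‖ := by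
  simp [l2, EuclideanSpace.norm_eq, sq_abs]

section Mode

variable {D : ℕ} {n : Fin D → ℕ} {d : Fin D}

def modeSlice (u : TIdx n → ℝ) (i : Fin (n d)) : EuclideanSpace ℝ (RIdx n d) :=
  WithLp.toLp 2 fun g => u (insIdx n d g i)

lemma Amat_mulVec (i j : Fin (n d)) (u : TIdx n → ℝ) :
    (Amat n d i j).mulVec u = fun g => u (insIdx n d g i) - u (insIdx n d g j) := by
  ext g
  simp [Amat, Matrix.mulVec, dotProduct, sub_mul, Finset.sum_sub_distrib]

lemma l2_Amat_mulVec (i j : Fin (n d)) (u : TIdx n → ℝ) :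
    l2 ((Amat n d i j).mulVec u) = dist (modeSlice u i) (modeSlice u j) := by
  rw [Amat_mulVec, l2_eq_norm, dist_eq_norm]
  rfl

variable {w : Fin (n d) → Fin (n d) → ℝ}

lemma Rmode_term_nonneg (hw : ∀ i j, 0 ≤ w i j) (u : TIdx n → ℝ) (i j : Fin (n d)) :
    0 ≤ if i < j then w i j * l2 ((Amat n d i j).mulVec u) else 0 := by
  split
  · exact mul_nonneg (hw i j) (Real.sqrt_nonneg _)
  · exact le_rfl

lemma Rmode_nonneg (hw : ∀ i j, 0 ≤ w i j) (u : TIdx n → ℝ) : 0 ≤ Rmode n d w u :=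
  Finset.sum_nonneg fun i _ => Finset.sum_nonneg fun j _ => Rmode_term_nonneg hw u i j

lemma mul_l2_Amat_mulVec_le_Rmode (hw : ∀ i j, 0 ≤ w i j) {a b : Fin (n d)} (hab : a < b)
    (u : TIdx n → ℝ) : w a b * l2 ((Amat n d a b).mulVec u) ≤ Rmode n d w u :=
  calc w a b * l2 ((Amat n d a b).mulVec u)
      = if a < b then w a b * l2 ((Amat n d a b).mulVec u) else 0 := (if_pos hab).symm
    _ ≤ ∑ j, if a < j then w a j * l2 ((Amat n d a j).mulVec u) else 0 :=
      Finset.single_le_sum (fun j _ => Rmode_term_nonneg hw u a j) (Finset.mem_univ b)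
    _ ≤ Rmode n d w u :=
      Finset.single_le_sum (fun i _ => Finset.sum_nonneg fun j _ => Rmode_term_nonneg hw u i j)
        (Finset.mem_univ a)

lemma exists_pos_mul_dist_modeSlice_le_Rmode (hw : ∀ i j, 0 ≤ w i j) {a b : Fin (n d)}
    (h : (a < b ∧ 0 < w a b) ∨ (b < a ∧ 0 < w b a)) :
    ∃ c, 0 < c ∧ ∀ u, c * dist (modeSlice u a) (modeSlice u b) ≤ Rmode n d w u := by
  rcases h with ⟨hab, hpos⟩ | ⟨hba, hpos⟩
  · refine ⟨w a b, hpos, fun u => ?_⟩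
    simpa only [l2_Amat_mulVec] using mul_l2_Amat_mulVec_le_Rmode hw hab u
  · refine ⟨w b a, hpos, fun u => ?_⟩
    simpa only [l2_Amat_mulVec, dist_comm] using mul_l2_Amat_mulVec_le_Rmode hw hba u

end Mode

/-- **uniform norm comparability of the mode penalties.** Under Assumption 4.1
for mode `d`, for every pair `i < j` there exists a constant `c > 0` (the minimum weight along
a connecting path) such that `c·‖A_{d,ij} u‖₂ ≤ R_d(u)` for all `u ∈ ℝⁿ`. -/
theorem Rmode_dominates_each_pair
    {D : ℕ} (n : Fin D → ℕ) (d : Fin D)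
    (w : Fin (n d) → Fin (n d) → ℝ) (hw : ∀ i j, 0 ≤ w i j)
    (hconn : ModeConnected n d w) :
    ∀ i j : Fin (n d), i < j →
      ∃ c : ℝ, 0 < c ∧
        ∀ u : TIdx n → ℝ, c * l2 ((Amat n d i j).mulVec u) ≤ Rmode n d w u := by
  intro i j _
  simp only [l2_Amat_mulVec]
  exact (hconn i j).exists_pos_mul_dist_le (Rmode_nonneg hw)
    fun a b hab => exists_pos_mul_dist_modeSlice_le_Rmode hw hab
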